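/- Let N > 100 and let (x_1, …, x_N) be the unique strictly decreasing zero-mean solution of the MIW recursion. Then 0 ≤ x_m ≤ 1/m. -/

import Mathlib

noncomputable section

/-- Partial sums `S_n = x_1 + ⋯ + x_n`. -/
def Ssum (x : ℕ → ℝ) (n : ℕ) : ℝ := ∑ i ∈ Finset.Icc 1 n, x i

/-- `x` is a solution of the MIW recursion
`x_{n+1} = x_n - 1/(x_1 + ⋯ + x_n)` for `1 ≤ n ≤ N - 1`. -/
def IsMIW (N : ℕ) (x : ℕ → ℝ) : Prop :=
  ∀ n, 1 ≤ n → n ≤ N - 1 → Ssum x n ≠ 0 ∧ x (n + 1) = x n - 1 / Ssum x n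

/-- `m = (N+1)/2` if `N` is odd and `m = N/2` if `N` is even; in natural number
division both equal `(N+1)/2`. -/
def mIdx (N : ℕ) : ℕ := (N + 1) / 2

/-!
The partial sums `S_n` (`1 ≤ n < N`) of a strictly decreasing sequence with `S_N = 0` are
positive. Along solutions of the MIW recursion with positive partial sums, `S_N` is strictly
increasing in `x_1`, so such a solution is determined by `S_N = 0`. As `k ↦ -x_{N+1-k}` is
another one, `x_k = -x_{N+1-k}`. For odd `N` this gives `x_m = 0`. For even `N` it gives
`x_{m+1} = -x_m`, so `x_m > 0` and the recursion at `m` reads `2 x_m S_m = 1`. Since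
`x_1, …, x_m > 0`, every `S_k` with `k ≤ m` is at most `S_m`, so each step of the recursion
before `m` descends by at least `1/S_m`, whence `x_i ≥ x_m + (m - i)/S_m`. Summing over `i ≤ m`
gives `S_m ≥ m x_m + m(m-1)/(2 S_m)`, i.e. `S_m² ≥ m²/2`, and so `x_m = 1/(2 S_m) ≤ 1/m`.
-/

open Finset

lemma strictAntiOn_Icc_of_succ_lt {β : Type*} [Preorder β] {f : ℕ → β} {a b : ℕ}
    (h : ∀ n, a ≤ n → n < b → f (n + 1) < f n) : StrictAntiOn f (Set.Icc a b) :=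
  strictAntiOn_of_succ_lt Set.ordConnected_Icc fun n _ hn hn1 => by
    rw [Order.succ_eq_add_one, Set.mem_Icc] at hn1
    exact h n hn.1 (by omega)

section Ssum

variable (x : ℕ → ℝ)

@[simp] lemma Ssum_zero : Ssum x 0 = 0 := by simp [Ssum]

@[simp] lemma Ssum_one : Ssum x 1 = x 1 := by simp [Ssum]

lemma Ssum_succ (n : ℕ) : Ssum x (n + 1) = Ssum x n + x (n + 1) :=
  sum_Icc_succ_top (by omega) x

lemma Ssum_add_sum_Ioc {a b : ℕ} (h : a ≤ b) : Ssum x a + ∑ i ∈ Ioc a b, x i = Ssum x b :=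
  sum_Ioc_consecutive x (Nat.zero_le a) h

lemma Ssum_le_Ssum_of_nonneg {a b : ℕ} (h : a ≤ b) (hx : ∀ i, a < i → i ≤ b → 0 ≤ x i) :
    Ssum x a ≤ Ssum x b := by
  rw [← Ssum_add_sum_Ioc x h]
  have : 0 ≤ ∑ i ∈ Ioc a b, x i :=
    sum_nonneg fun i hi => hx i (mem_Ioc.1 hi).1 (mem_Ioc.1 hi).2
  linarith

lemma mul_add_le_Ssum {a d : ℝ} {m : ℕ} (h : ∀ i, 1 ≤ i → i ≤ m → a + (m - i) * d ≤ x i) :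
    m * a + m * (m - 1) / 2 * d ≤ Ssum x m := by
  have gauss : ∀ n : ℕ, ∑ i ∈ Icc 1 n, (i : ℝ) = n * (n + 1) / 2 := by
    intro n
    induction n with
    | zero => simp
    | succ n ih => rw [sum_Icc_succ_top (by omega), ih]; push_cast; ring
  calc (m : ℝ) * a + m * (m - 1) / 2 * d = ∑ i ∈ Icc 1 m, (a + (m - i) * d) := by
        rw [sum_add_distrib, ← sum_mul, sum_sub_distrib, gauss]
        simp only [sum_const, Nat.card_Icc, Nat.add_sub_cancel, nsmul_eq_mul]
        ring
    _ ≤ Ssum x m := sum_le_sum fun i hi => h i (mem_Icc.1 hi).1 (mem_Icc.1 hi).2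

lemma Ssum_pos_of_strictAntiOn {N : ℕ} (hx : StrictAntiOn x (Set.Icc 1 N))
    (hsum : Ssum x N = 0) {n : ℕ} (hn : 1 ≤ n) (hnN : n < N) : 0 < Ssum x n := by
  by_contra! hS
  have hxn : x n ≤ 0 := by
    have hle : (n : ℝ) * x n ≤ Ssum x n := by
      have h := card_nsmul_le_sum (Icc 1 n) x (x n) fun i hi => by
        obtain ⟨hi1, hin⟩ := mem_Icc.1 hi
        exact hx.antitoneOn ⟨hi1, by omega⟩ ⟨hn, hnN.le⟩ hin
      simpa [Ssum] using h
    have : (1 : ℝ) ≤ n := by exact_mod_cast hn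
    nlinarith
  have htail : ∑ i ∈ Ioc n N, x i < 0 := by
    refine sum_neg (fun i hi => ?_) ⟨N, mem_Ioc.2 ⟨hnN, le_rfl⟩⟩
    obtain ⟨hni, hiN⟩ := mem_Ioc.1 hi
    exact (hx ⟨hn, hnN.le⟩ ⟨by omega, hiN⟩ hni).trans_le hxn
  linarith [Ssum_add_sum_Ioc x hnN.le]

end Ssum

def negReflect (N : ℕ) (x : ℕ → ℝ) (k : ℕ) : ℝ := -x (N + 1 - k)

lemma Ssum_negReflect {N : ℕ} {x : ℕ → ℝ} (hsum : Ssum x N = 0) {n : ℕ} (hn : n ≤ N) :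
    Ssum (negReflect N x) n = Ssum x (N - n) := by
  have hre : ∑ i ∈ Icc 1 n, x (N + 1 - i) = ∑ j ∈ Ioc (N - n) N, x j := by
    refine sum_nbij' (fun i => N + 1 - i) (fun j => N + 1 - j) ?_ ?_ ?_ ?_ fun _ _ => rfl <;>
      intro i hi <;> simp at hi ⊢ <;> omega
  have := Ssum_add_sum_Ioc x (Nat.sub_le N n)
  rw [show Ssum (negReflect N x) n = -∑ i ∈ Icc 1 n, x (N + 1 - i) from sum_neg_distrib _,
    hre]
  linarith

lemma isMIW_negReflect {N : ℕ} {x : ℕ → ℝ} (hx : IsMIW N x) (hsum : Ssum x N = 0) :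
    IsMIW N (negReflect N x) := by
  intro n hn hnN
  obtain ⟨hne, hrec⟩ := hx (N - n) (by omega) (by omega)
  rw [Ssum_negReflect hsum (by omega)]
  refine ⟨hne, ?_⟩
  rw [show N - n + 1 = N + 1 - n by omega] at hrec
  simp only [negReflect, show N + 1 - (n + 1) = N - n by omega, hrec]
  ring

namespace IsMIW

variable {N : ℕ} {x y : ℕ → ℝ}

lemma lt_and_Ssum_lt_of_one_lt (hx : IsMIW N x) (hy : IsMIW N y)
    (hxpos : ∀ n, 1 ≤ n → n < N → 0 < Ssum x n) (h1 : x 1 < y 1) {n : ℕ} (hn : 1 ≤ n)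
    (hnN : n ≤ N) : x n < y n ∧ Ssum x n < Ssum y n := by
  induction n, hn using Nat.le_induction with
  | base => simpa using h1
  | succ k hk ih =>
    obtain ⟨hxy, hS⟩ := ih (by omega)
    have hinv : 1 / Ssum y k < 1 / Ssum x k :=
      one_div_lt_one_div_of_lt (hxpos k hk (by omega)) hS
    have hxy' : x (k + 1) < y (k + 1) := by
      rw [(hx k hk (by omega)).2, (hy k hk (by omega)).2]
      linarith
    exact ⟨hxy', by rw [Ssum_succ, Ssum_succ]; linarith⟩

lemma eq_and_Ssum_eq_of_one_eq (hx : IsMIW N x) (hy : IsMIW N y) (h1 : x 1 = y 1) {n : ℕ}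
    (hn : 1 ≤ n) (hnN : n ≤ N) : x n = y n ∧ Ssum x n = Ssum y n := by
  induction n, hn using Nat.le_induction with
  | base => simpa using h1
  | succ k hk ih =>
    obtain ⟨hxy, hS⟩ := ih (by omega)
    have hxy' : x (k + 1) = y (k + 1) := by
      rw [(hx k hk (by omega)).2, (hy k hk (by omega)).2, hxy, hS]
    exact ⟨hxy', by rw [Ssum_succ, Ssum_succ, hS, hxy']⟩

lemma one_eq_of_Ssum_eq_zero (hx : IsMIW N x) (hy : IsMIW N y)
    (hxpos : ∀ n, 1 ≤ n → n < N → 0 < Ssum x n) (hypos : ∀ n, 1 ≤ n → n < N → 0 < Ssum y n)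
    (hxN : Ssum x N = 0) (hyN : Ssum y N = 0) (hN : 1 ≤ N) : x 1 = y 1 := by
  rcases lt_trichotomy (x 1) (y 1) with h | h | h
  · linarith [(hx.lt_and_Ssum_lt_of_one_lt hy hxpos h hN le_rfl).2]
  · exact h
  · linarith [(hy.lt_and_Ssum_lt_of_one_lt hx hypos h hN le_rfl).2]

lemma eq_neg_apply_reflect (hx : IsMIW N x) (hdec : StrictAntiOn x (Set.Icc 1 N))
    (hsum : Ssum x N = 0) (hN : 1 ≤ N) {n : ℕ} (hn : 1 ≤ n) (hnN : n ≤ N) :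
    x n = -x (N + 1 - n) := by
  have hxpos : ∀ n, 1 ≤ n → n < N → 0 < Ssum x n := fun n hn hnN =>
    Ssum_pos_of_strictAntiOn x hdec hsum hn hnN
  have hypos : ∀ n, 1 ≤ n → n < N → 0 < Ssum (negReflect N x) n := fun n hn hnN => by
    rw [Ssum_negReflect hsum hnN.le]
    exact hxpos (N - n) (by omega) (by omega)
  have hyN : Ssum (negReflect N x) N = 0 := by
    rw [Ssum_negReflect hsum le_rfl, Nat.sub_self, Ssum_zero]
  have hy := isMIW_negReflect hx hsum
  exact (hx.eq_and_Ssum_eq_of_one_eq hy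
    (hx.one_eq_of_Ssum_eq_zero hy hxpos hypos hsum hyN hN) hn hnN).1

lemma add_div_le (hx : IsMIW N x) {s : ℝ} {i j : ℕ} (hi : 1 ≤ i) (hij : i ≤ j) (hjN : j ≤ N)
    (hS : ∀ k, i ≤ k → k < j → 0 < Ssum x k ∧ Ssum x k ≤ s) : x j + (j - i) / s ≤ x i := by
  induction j, hij using Nat.le_induction with
  | base => simp
  | succ k hik ih =>
    obtain ⟨hpos, hle⟩ := hS k hik (by omega)
    have hstep : 1 / s ≤ 1 / Ssum x k := one_div_le_one_div_of_le hpos hle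
    calc x (k + 1) + ((k + 1 : ℕ) - i) / s
        _ = x k - 1 / Ssum x k + 1 / s + (k - i) / s := by
          rw [(hx k (by omega) (by omega)).2]; push_cast; ring
        _ ≤ x k + (k - i) / s := by linarith
        _ ≤ x i := ih (by omega) fun k' h1 h2 => hS k' h1 (by omega)

lemma pos_and_le_one_div_of_succ_eq_neg (hx : IsMIW N x)
    (hdec : StrictAntiOn x (Set.Icc 1 N)) (hsum : Ssum x N = 0) {m : ℕ} (hm : 1 ≤ m)
    (hmN : m < N) (hmid : x (m + 1) = -x m) :
    0 < x m ∧ x m ≤ 1 / m := by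
  have hxm : 0 < x m := by
    have := hdec ⟨hm, hmN.le⟩ ⟨by omega, hmN⟩ (lt_add_one m)
    linarith
  set S := Ssum x m with hS_def
  have hS : 0 < S := Ssum_pos_of_strictAntiOn x hdec hsum hm hmN
  have hxS : x m * S = 1 / 2 := by
    have := (hx m hm (by omega)).2
    rw [hmid, ← hS_def] at this
    field_simp at this ⊢
    linarith
  have hpos : ∀ i, 1 ≤ i → i ≤ m → 0 < x i := fun i hi him =>
    hxm.trans_le (hdec.antitoneOn ⟨hi, by omega⟩ ⟨hm, hmN.le⟩ him)
  have hlow : ∀ i, 1 ≤ i → i ≤ m → x m + (m - i) * (1 / S) ≤ x i := fun i hi him => by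
    rw [← div_eq_mul_one_div]
    exact hx.add_div_le hi him hmN.le fun k hik hkm =>
      ⟨Ssum_pos_of_strictAntiOn x hdec hsum (by omega) (by omega),
        Ssum_le_Ssum_of_nonneg x hkm.le fun j hj hjm => (hpos j (by omega) hjm).le⟩
  have hsq : (m : ℝ) ^ 2 ≤ 2 * S ^ 2 := by
    have := mul_le_mul_of_nonneg_right (mul_add_le_Ssum x hlow) hS.le
    field_simp at this
    nlinarith
  have hmS : (m : ℝ) ≤ 2 * S := by nlinarith
  refine ⟨hxm, ?_⟩
  rw [le_div_iff₀ (by exact_mod_cast hm)]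
  nlinarith

end IsMIW

/-- For the unique strictly decreasing zero-mean solution of the MIW recursion with
`N > 100`, one has `0 ≤ x_m ≤ 1/m`. -/
theorem xm_bound (N : ℕ) (hN : 100 < N) (x : ℕ → ℝ)
    (hMIW : IsMIW N x) (hdec : ∀ n, 1 ≤ n → n < N → x (n + 1) < x n)
    (hmean : ∑ i ∈ Finset.Icc 1 N, x i = 0) :
    0 ≤ x (mIdx N) ∧ x (mIdx N) ≤ 1 / (mIdx N : ℝ) := by
  have hanti : StrictAntiOn x (Set.Icc 1 N) := strictAntiOn_Icc_of_succ_lt hdec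
  have hsymm := fun n => hMIW.eq_neg_apply_reflect hanti hmean (by omega) (n := n)
  rcases Nat.even_or_odd' N with ⟨m, rfl | rfl⟩
  · have hmid : x (m + 1) = -x m := by
      have := hsymm m (by omega) (by omega)
      rw [show 2 * m + 1 - m = m + 1 by omega] at this
      linarith
    rw [show mIdx (2 * m) = m by unfold mIdx; omega]
    exact (hMIW.pos_and_le_one_div_of_succ_eq_neg hanti hmean (by omega) (by omega)
      hmid).imp_left le_of_lt
  · have hzero : x (m + 1) = 0 := by
      have := hsymm (m + 1) (by omega) (by omega)
      rw [show 2 * m + 1 + 1 - (m + 1) = m + 1 by omega] at this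
      linarith
    rw [show mIdx (2 * m + 1) = m + 1 by unfold mIdx; omega, hzero]
    exact ⟨le_rfl, by positivity⟩
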